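/- arXiv:2001.08902 — 3 statements merged into one kernel-verified Lean document; each statement's English description precedes it below -/
import Mathlib

section
/- Let P(λ) = −λʲ J + Σ_{i=0}^{k} λⁱ A_i where J is real skew-symmetric and each A_i is real symmetric positive semidefinite (n×n), with 0 ≤ j ≤ k. Then det P(λ) ≡ 0 if and only if the kernels of J, A₀, …, A_k have a nontrivial common intersection. -/
/-!
Evaluating at `λ = 1` shows that `det P ≡ 0` forces a nonzero `x` with `(A₀ + ⋯ + A_k - J) x = 0`.
Since `J` is skew, `xᵀ J x = 0`, so `xᵀ (A₀ + ⋯ + A_k) x = 0`; each `xᵀ A_i x` is nonnegative, hence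
zero, hence `A_i x = 0` by semidefiniteness, and then also `J x = 0`. Conversely, a common kernel
vector, viewed as a constant polynomial vector, is annihilated by `P(λ)`.
-/

open Matrix Polynomial

namespace Matrix

variable {n ι : Type*} [Fintype n]

theorem dotProduct_mulVec_self_eq_zero_of_transpose_eq_neg {R : Type*} [CommRing R]
    [IsAddTorsionFree R] {J : Matrix n n R} (hJ : Jᵀ = -J) (x : n → R) :
    x ⬝ᵥ J *ᵥ x = 0 := by
  refine self_eq_neg.mp ?_
  calc x ⬝ᵥ J *ᵥ x = J *ᵥ x ⬝ᵥ x := dotProduct_comm _ _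
    _ = x ᵥ* Jᵀ ⬝ᵥ x := by rw [vecMul_transpose]
    _ = -(x ⬝ᵥ J *ᵥ x) := by rw [hJ, vecMul_neg, neg_dotProduct, ← dotProduct_mulVec]

open scoped ComplexOrder in
theorem PosSemidef.sum_mulVec_eq_zero_iff {𝕜 : Type*} [RCLike 𝕜] {A : ι → Matrix n n 𝕜}
    {s : Finset ι} (hA : ∀ i ∈ s, (A i).PosSemidef) (x : n → 𝕜) :
    (∑ i ∈ s, A i) *ᵥ x = 0 ↔ ∀ i ∈ s, A i *ᵥ x = 0 := by
  refine ⟨fun h i hi => ?_, fun h => by rw [sum_mulVec, Finset.sum_eq_zero h]⟩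
  have hsum : ∑ i ∈ s, star x ⬝ᵥ A i *ᵥ x = 0 := by
    rw [← dotProduct_sum, ← sum_mulVec, h, dotProduct_zero]
  have hnonneg : ∀ i ∈ s, 0 ≤ star x ⬝ᵥ A i *ᵥ x := fun i hi =>
    (hA i hi).dotProduct_mulVec_nonneg x
  exact ((hA i hi).dotProduct_mulVec_zero_iff x).mp
    ((Finset.sum_eq_zero_iff_of_nonneg hnonneg).mp hsum i hi)

theorem neg_add_mulVec_eq_zero_iff_of_transpose_eq_neg {J S : Matrix n n ℝ} (hJ : Jᵀ = -J)
    (hS : S.PosSemidef) (x : n → ℝ) :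
    (-J + S) *ᵥ x = 0 ↔ J *ᵥ x = 0 ∧ S *ᵥ x = 0 := by
  refine ⟨fun h => ?_, fun ⟨hJx, hSx⟩ => by
    rw [add_mulVec, neg_mulVec, hJx, hSx, neg_zero, add_zero]⟩
  have hSx : S *ᵥ x = 0 := by
    refine (hS.dotProduct_mulVec_zero_iff x).mp ?_
    have := congrArg (x ⬝ᵥ ·) h
    simpa only [add_mulVec, neg_mulVec, dotProduct_add, dotProduct_neg,
      dotProduct_mulVec_self_eq_zero_of_transpose_eq_neg hJ, neg_zero, zero_add,
      dotProduct_zero, star_trivial] using this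
  rw [add_mulVec, neg_mulVec, hSx, add_zero, neg_eq_zero] at h
  exact ⟨h, hSx⟩

variable [DecidableEq n] {R : Type*} [CommRing R]

theorem det_map_eval_eq_zero {M : Matrix n n R[X]} (h : M.det = 0) (a : R) :
    (M.map (eval a)).det = 0 := by
  rw [← coe_evalRingHom, ← RingHom.mapMatrix_apply, ← RingHom.map_det, h, map_zero]

end Matrix

section StructuredPolynomial

variable {n ι : Type*} [Fintype ι] {R : Type*} [CommRing R]
  (J : Matrix n n R) (A : ι → Matrix n n R) (j : ℕ) (e : ι → ℕ)

theorem map_eval_neg_smul_add_sum_smul (a : R) :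
    (-((X : R[X]) ^ j • J.map C) + ∑ i, (X : R[X]) ^ e i • (A i).map C).map (eval a) =
      -(a ^ j • J) + ∑ i, a ^ e i • A i := by
  ext p q
  simp only [map_apply, Matrix.add_apply, Matrix.neg_apply, Matrix.smul_apply, Matrix.sum_apply,
    smul_eq_mul, eval_add, eval_neg, eval_mul, eval_pow, eval_X, eval_C, eval_finsetSum]

theorem neg_smul_add_sum_smul_mulVec_C_comp [Fintype n] {x : n → R} (hJ : J *ᵥ x = 0)
    (hA : ∀ i, A i *ᵥ x = 0) :
    (-((X : R[X]) ^ j • J.map C) + ∑ i, (X : R[X]) ^ e i • (A i).map C) *ᵥ (C ∘ x) = 0 := by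
  have hC : ∀ M : Matrix n n R, M.map C *ᵥ (C ∘ x) = C ∘ (M *ᵥ x) := fun M => by
    funext p
    exact (RingHom.map_mulVec C M x p).symm
  simp only [add_mulVec, neg_mulVec, sum_mulVec, smul_mulVec, hC, hJ, hA]
  ext p
  simp

end StructuredPolynomial

theorem structured_poly_singular_iff_common_kernel_general
    (n k j : ℕ)
    (J : Matrix (Fin n) (Fin n) ℝ) (A : Fin (k + 1) → Matrix (Fin n) (Fin n) ℝ)
    (hJ : Jᵀ = -J) (hA : ∀ i, (A i).PosSemidef) :
    (-((X : ℝ[X]) ^ j • J.map C) + ∑ i : Fin (k + 1), (X : ℝ[X]) ^ (i : ℕ) • (A i).map C).det = 0 ↔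
      ∃ x : Fin n → ℝ, x ≠ 0 ∧ J.mulVec x = 0 ∧ ∀ i, (A i).mulVec x = 0 := by
  have hA' : ∀ i ∈ Finset.univ, (A i).PosSemidef := fun i _ => hA i
  constructor
  · intro hdet
    have hdet₁ := det_map_eval_eq_zero hdet 1
    simp only [map_eval_neg_smul_add_sum_smul, one_pow, one_smul] at hdet₁
    obtain ⟨x, hx0, hx⟩ := exists_mulVec_eq_zero_iff.mpr hdet₁
    obtain ⟨hJx, hAx⟩ :=
      (neg_add_mulVec_eq_zero_iff_of_transpose_eq_neg hJ (posSemidef_sum _ hA') x).mp hx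
    exact ⟨x, hx0, hJx, fun i => (PosSemidef.sum_mulVec_eq_zero_iff hA' x).mp hAx i
      (Finset.mem_univ i)⟩
  · rintro ⟨x, hx0, hJx, hAx⟩
    refine exists_mulVec_eq_zero_iff.mp ⟨C ∘ x, fun h => hx0 ?_,
      neg_smul_add_sum_smul_mulVec_C_comp J A j _ hJx hAx⟩
    ext p
    simpa using congrFun h p

theorem structured_poly_singular_iff_common_kernel
    (n k j : ℕ) (hjk : j ≤ k)
    (J : Matrix (Fin n) (Fin n) ℝ) (A : Fin (k + 1) → Matrix (Fin n) (Fin n) ℝ)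
    (hJ : Jᵀ = -J) (hA : ∀ i, (A i).PosSemidef) :
    (-((X : ℝ[X]) ^ j • J.map C) + ∑ i : Fin (k + 1), (X : ℝ[X]) ^ (i : ℕ) • (A i).map C).det = 0 ↔
      ∃ x : Fin n → ℝ, x ≠ 0 ∧ J.mulVec x = 0 ∧ ∀ i, (A i).mulVec x = 0 :=
  structured_poly_singular_iff_common_kernel_general n k j J A hJ hA
end

section
/- Let P(λ) = −λʲ J + Σ_{i=0}^{k} λⁱ A_i with J real skew-symmetric and each A_i real symmetric positive semidefinite. If α > 0 and the matrix P(α) is singular, then det P(λ) is identically zero. -/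
/-!
If `P(α) v = 0` with `α > 0`, then `vᵀ J v = 0` by skew-symmetry, so `vᵀ P(α) v = Σ αⁱ vᵀ Aᵢ v = 0`
is a sum of nonnegative terms. Each `vᵀ Aᵢ v` therefore vanishes, which for positive semidefinite `Aᵢ`
means `Aᵢ v = 0`; then `P(α) v = 0` forces `J v = 0` as well. So the constant vector `v` lies in the
kernel of `P(λ)` for every `λ`, and `det P(λ)` vanishes identically.
-/

open Matrix Polynomial

section

variable {n : Type*} [Fintype n]

theorem Matrix.dotProduct_mulVec_self_eq_zero_of_transpose_eq_neg_s6 {R : Type*} [CommRing R]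
    [IsAddTorsionFree R] {J : Matrix n n R} (hJ : Jᵀ = -J) (v : n → R) :
    v ⬝ᵥ J *ᵥ v = 0 := by
  refine self_eq_neg.mp ?_
  calc v ⬝ᵥ J *ᵥ v = v ⬝ᵥ Jᵀ *ᵥ v := by
        rw [mulVec_transpose, dotProduct_comm v (v ᵥ* J), dotProduct_mulVec]
    _ = -(v ⬝ᵥ J *ᵥ v) := by rw [hJ, neg_mulVec, dotProduct_neg]

open scoped ComplexOrder in
theorem Matrix.PosSemidef.dotProduct_sum_mulVec_eq_zero_iff {ι 𝕜 : Type*} [RCLike 𝕜]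
    {s : Finset ι} {B : ι → Matrix n n 𝕜} (hB : ∀ i ∈ s, (B i).PosSemidef) (v : n → 𝕜) :
    star v ⬝ᵥ (∑ i ∈ s, B i) *ᵥ v = 0 ↔ ∀ i ∈ s, B i *ᵥ v = 0 := by
  rw [sum_mulVec, dotProduct_sum,
    Finset.sum_eq_zero_iff_of_nonneg fun i hi ↦ (hB i hi).dotProduct_mulVec_nonneg v]
  exact forall₂_congr fun i hi ↦ (hB i hi).dotProduct_mulVec_zero_iff v

theorem Matrix.map_mulVec_comp_eq_zero {R S : Type*} [NonAssocSemiring R] [NonAssocSemiring S]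
    (f : R →+* S) {M : Matrix n n R} {v : n → R} (hM : M *ᵥ v = 0) :
    M.map f *ᵥ (f ∘ v) = 0 := by
  ext i
  rw [← RingHom.map_mulVec, hM, Pi.zero_apply, map_zero, Pi.zero_apply]

def structuredMatrix {S : Type*} [CommRing S] {k : ℕ} (j : ℕ) (J : Matrix n n S)
    (A : Fin (k + 1) → Matrix n n S) (x : S) : Matrix n n S :=
  -(x ^ j • J) + ∑ i : Fin (k + 1), x ^ (i : ℕ) • A i

section structuredMatrix

variable {S : Type*} [CommRing S] {k : ℕ} {j : ℕ} {J : Matrix n n S}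
  {A : Fin (k + 1) → Matrix n n S} {x : S} {v : n → S}

theorem structuredMatrix_mulVec :
    structuredMatrix j J A x *ᵥ v =
      -(x ^ j • J *ᵥ v) + ∑ i : Fin (k + 1), x ^ (i : ℕ) • A i *ᵥ v := by
  simp only [structuredMatrix, add_mulVec, neg_mulVec, sum_mulVec, smul_mulVec]

theorem structuredMatrix_mulVec_eq_zero (hJ : J *ᵥ v = 0) (hA : ∀ i, A i *ᵥ v = 0) :
    structuredMatrix j J A x *ᵥ v = 0 := by
  simp [structuredMatrix_mulVec, hJ, hA]

end structuredMatrix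

theorem mulVec_eq_zero_of_structuredMatrix_mulVec_eq_zero {k : ℕ} (j : ℕ) {J : Matrix n n ℝ}
    {A : Fin (k + 1) → Matrix n n ℝ} (hJ : Jᵀ = -J) (hA : ∀ i, (A i).PosSemidef) {α : ℝ}
    (hα : 0 < α) {v : n → ℝ} (hv : structuredMatrix j J A α *ᵥ v = 0) :
    J *ᵥ v = 0 ∧ ∀ i, A i *ᵥ v = 0 := by
  have hquad : v ⬝ᵥ (∑ i : Fin (k + 1), α ^ (i : ℕ) • A i) *ᵥ v = 0 := by
    simpa [structuredMatrix, add_mulVec, neg_mulVec, smul_mulVec, dotProduct_neg,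
      dotProduct_mulVec_self_eq_zero_of_transpose_eq_neg_s6 hJ]
      using congrArg (v ⬝ᵥ ·) hv
  have hA0 : ∀ i, A i *ᵥ v = 0 := by
    intro i
    have hAi := (PosSemidef.dotProduct_sum_mulVec_eq_zero_iff
      (fun i _ ↦ (hA i).smul (pow_pos hα i).le) v).mp (by simpa using hquad) i (Finset.mem_univ i)
    rwa [smul_mulVec, smul_eq_zero, or_iff_right (pow_pos hα _).ne'] at hAi
  refine ⟨?_, hA0⟩
  simpa [structuredMatrix_mulVec, hA0, (pow_pos hα j).ne'] using hv

end

theorem structured_poly_singular_of_singular_at_pos_general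
    (n k j : ℕ)
    (J : Matrix (Fin n) (Fin n) ℝ) (A : Fin (k + 1) → Matrix (Fin n) (Fin n) ℝ)
    (hJ : Jᵀ = -J) (hA : ∀ i, (A i).PosSemidef)
    (α : ℝ) (hα : 0 < α)
    (hsing : (-(α ^ j • J) + ∑ i : Fin (k + 1), α ^ (i : ℕ) • A i).det = 0) :
    (-((X : ℝ[X]) ^ j • J.map C) + ∑ i : Fin (k + 1), (X : ℝ[X]) ^ (i : ℕ) • (A i).map C).det = 0 := by
  obtain ⟨v, hv0, hv⟩ := exists_mulVec_eq_zero_iff.mpr hsing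
  obtain ⟨hJv, hAv⟩ := mulVec_eq_zero_of_structuredMatrix_mulVec_eq_zero j hJ hA hα hv
  refine exists_mulVec_eq_zero_iff.mp ⟨C ∘ v, ?_, ?_⟩
  · exact fun h ↦ hv0 (funext fun i ↦ by simpa using congrFun h i)
  · exact structuredMatrix_mulVec_eq_zero (map_mulVec_comp_eq_zero C hJv)
      fun i ↦ map_mulVec_comp_eq_zero C (hAv i)

theorem structured_poly_singular_of_singular_at_pos
    (n k j : ℕ) (hjk : j ≤ k)
    (J : Matrix (Fin n) (Fin n) ℝ) (A : Fin (k + 1) → Matrix (Fin n) (Fin n) ℝ)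
    (hJ : Jᵀ = -J) (hA : ∀ i, (A i).PosSemidef)
    (α : ℝ) (hα : 0 < α)
    (hsing : (-(α ^ j • J) + ∑ i : Fin (k + 1), α ^ (i : ℕ) • A i).det = 0) :
    (-((X : ℝ[X]) ^ j • J.map C) + ∑ i : Fin (k + 1), (X : ℝ[X]) ^ (i : ℕ) • (A i).map C).det = 0 :=
  structured_poly_singular_of_singular_at_pos_general n k j J A hJ hA α hα hsing
end

section
/- Let J be skew-symmetric and X₀, …, X_ℓ symmetric positive semidefinite real n×n matrices such that the kernel of −J + X₀ + ⋯ + X_ℓ has dimension r > 0. Then there exists an orthogonal matrix U ∈ ℝ^{n×n} such that UᵀJU, UᵀX₀U, …, UᵀX_ℓU are all block diagonal of the form diag(B, 0) with B of size (n−r)×(n−r), and the (n−r)×(n−r) matrix −J̃ + X̃₀ + ⋯ + X̃_ℓ formed from the leading blocks is invertible. -/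
/-! If `(-J + ∑ Xᵢ) v = 0` then `0 = vᵀ (-J + ∑ Xᵢ) v = ∑ vᵀ Xᵢ v`, so every `Xᵢ v = 0` and then
`J v = 0`. Hence the kernel `K` of `A = -J + ∑ Xᵢ` is annihilated by `J`, by every `Xᵢ` and by their
transposes, and in an orthonormal basis listing `Kᗮ` first and `K` last all of them become
`diag(B, 0)`. The leading block of `UᵀAU` is injective: if it kills `w ∈ Kᗮ`, then `A w` is orthogonal
to `Kᗮ`, and to `K` because `Aᵀ` kills `K`; so `A w = 0` and `w ∈ K ∩ Kᗮ = 0`. -/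

open Matrix

open Module LinearMap

open scoped InnerProductSpace

namespace Matrix

variable {m ι : Type*} [Fintype m] [Fintype ι]

theorem dotProduct_mulVec_self_eq_zero_of_transpose_eq_neg_s18 {J : Matrix m m ℝ} (hJ : Jᵀ = -J)
    (v : m → ℝ) : v ⬝ᵥ (J *ᵥ v) = 0 := by
  have h : v ⬝ᵥ (J *ᵥ v) = (Jᵀ *ᵥ v) ⬝ᵥ v := by rw [mulVec_transpose, dotProduct_mulVec]
  rw [hJ, neg_mulVec, neg_dotProduct, dotProduct_comm (J *ᵥ v)] at h
  linarith

theorem mulVec_eq_zero_of_neg_add_sum_posSemidef {J : Matrix m m ℝ} {X : ι → Matrix m m ℝ}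
    (hJ : Jᵀ = -J) (hX : ∀ i, (X i).PosSemidef) {v : m → ℝ} (hv : (-J + ∑ i, X i) *ᵥ v = 0) :
    J *ᵥ v = 0 ∧ ∀ i, X i *ᵥ v = 0 := by
  have hquad : ∑ i, v ⬝ᵥ (X i *ᵥ v) = 0 := by
    simpa [add_mulVec, neg_mulVec, sum_mulVec, dotProduct_sum,
      dotProduct_mulVec_self_eq_zero_of_transpose_eq_neg_s18 hJ] using congrArg (v ⬝ᵥ ·) hv
  have hXv (i : ι) : X i *ᵥ v = 0 := by
    have hnonneg (i : ι) (_ : i ∈ Finset.univ) : 0 ≤ v ⬝ᵥ (X i *ᵥ v) := by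
      simpa using (hX i).dotProduct_mulVec_nonneg v
    simpa using (hX i).dotProduct_mulVec_zero_iff v |>.1 <| by
      simpa using (Finset.sum_eq_zero_iff_of_nonneg hnonneg).1 hquad i (Finset.mem_univ i)
  refine ⟨?_, hXv⟩
  simpa [add_mulVec, neg_mulVec, sum_mulVec, hXv] using hv

variable {𝕜 : Type*} [RCLike 𝕜] [DecidableEq m]

theorem ker_toEuclideanLin_le_ker {A M : Matrix m m 𝕜} (h : ∀ v, A *ᵥ v = 0 → M *ᵥ v = 0) :
    ker (toEuclideanLin A) ≤ ker (toEuclideanLin M) := fun x hx => by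
  simpa [toLpLin_apply] using h _ (by simpa [toLpLin_apply] using hx)

theorem ker_toEuclideanLin_le_ker_adjoint {A M : Matrix m m 𝕜}
    (h : ∀ v, A *ᵥ v = 0 → Mᴴ *ᵥ v = 0) :
    ker (toEuclideanLin A) ≤ ker (toEuclideanLin M).adjoint :=
  toEuclideanLin_conjTranspose_eq_adjoint M ▸ ker_toEuclideanLin_le_ker h

theorem finrank_ker_toEuclideanLin (A : Matrix m m 𝕜) :
    finrank 𝕜 (ker (toEuclideanLin A)) = finrank 𝕜 (ker A.mulVecLin) := by
  have : ker (toEuclideanLin A) =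
      (ker A.mulVecLin).comap (WithLp.linearEquiv 2 𝕜 (m → 𝕜)).toLinearMap := by
    ext x; simp [toLpLin_apply]
  rw [this, Submodule.comap_equiv_eq_map_symm, LinearEquiv.finrank_map_eq]

end Matrix

theorem OrthonormalBasis.conjTranspose_toMatrix_mul_mul_toMatrix_apply {𝕜 m : Type*} [RCLike 𝕜]
    [Fintype m] [DecidableEq m] (b : OrthonormalBasis m 𝕜 (EuclideanSpace 𝕜 m))
    (M : Matrix m m 𝕜) (i j : m) :
    (((EuclideanSpace.basisFun m 𝕜).toBasis.toMatrix b)ᴴ * M *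
      (EuclideanSpace.basisFun m 𝕜).toBasis.toMatrix b) i j =
      ⟪b i, toEuclideanLin M (b j)⟫_𝕜 := by
  simp only [Matrix.mul_apply, conjTranspose_apply, Module.Basis.toMatrix_apply,
    OrthonormalBasis.coe_toBasis_repr_apply, EuclideanSpace.basisFun_repr, RCLike.star_def,
    Finset.sum_mul, toLpLin_apply, EuclideanSpace.inner_eq_star_dotProduct, dotProduct, mulVec,
    Pi.star_apply]
  exact Finset.sum_comm.trans <|
    Finset.sum_congr rfl fun _ _ => Finset.sum_congr rfl fun _ _ => by ring

section InnerProductSpace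

variable {𝕜 E : Type*} [RCLike 𝕜] [NormedAddCommGroup E] [InnerProductSpace 𝕜 E]
  [FiniteDimensional 𝕜 E]

theorem Submodule.exists_orthonormalBasis_orthogonal_append (K : Submodule 𝕜 E) {n : ℕ}
    (hn : finrank 𝕜 E = n) :
    ∃ b : OrthonormalBasis (Fin n) 𝕜 E, ∀ i : Fin n,
      ((i : ℕ) < finrank 𝕜 Kᗮ → b i ∈ Kᗮ) ∧ (finrank 𝕜 Kᗮ ≤ i → b i ∈ K) := by
  have hdim : finrank 𝕜 Kᗮ + finrank 𝕜 Kᗮᗮ = n := hn ▸ Kᗮ.finrank_add_finrank_orthogonal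
  let e := finSumFinEquiv.trans (finCongr hdim)
  let b := (((stdOrthonormalBasis 𝕜 Kᗮ).prod (stdOrthonormalBasis 𝕜 Kᗮᗮ)).map
    Kᗮ.orthogonalDecomposition.symm).reindex e
  refine ⟨b, fun i => ?_⟩
  obtain ⟨s, rfl⟩ := e.surjective i
  rcases s with j | j
  · simp [b, e]
  · simpa [b, e] using K.orthogonal_orthogonal.le (stdOrthonormalBasis 𝕜 Kᗮᗮ j).2

namespace OrthonormalBasis

variable {n k : ℕ} {K : Submodule 𝕜 E} {b : OrthonormalBasis (Fin n) 𝕜 E} {T : E →ₗ[𝕜] E}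

theorem inner_apply_eq_zero_of_le_ker (hT : K ≤ ker T) (hT' : K ≤ ker T.adjoint)
    (hbK : ∀ i : Fin n, k ≤ (i : ℕ) → b i ∈ K) {i j : Fin n} (hij : k ≤ (i : ℕ) ∨ k ≤ (j : ℕ)) :
    ⟪b i, T (b j)⟫_𝕜 = 0 := by
  rcases hij with hi | hj
  · rw [← adjoint_inner_left, hT' (hbK i hi), inner_zero_left]
  · rw [hT (hbK j hj), inner_zero_right]

theorem isUnit_of_inner_apply (hT : ker T ≤ ker T.adjoint) (hk : k ≤ n)
    (hbperp : ∀ i : Fin n, (i : ℕ) < k → b i ∈ (ker T)ᗮ)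
    (hbK : ∀ i : Fin n, k ≤ (i : ℕ) → b i ∈ ker T) :
    IsUnit (Matrix.of fun i j : Fin k => ⟪b (Fin.castLE hk i), T (b (Fin.castLE hk j))⟫_𝕜) := by
  rw [← Matrix.mulVec_injective_iff_isUnit, ← Matrix.coe_mulVecLin, ← ker_eq_bot, ker_eq_bot']
  intro x hx
  set w := ∑ q, x q • b (Fin.castLE hk q)
  have hw_perp : w ∈ (ker T)ᗮ :=
    Submodule.sum_mem _ fun q _ => Submodule.smul_mem _ _ (hbperp _ q.isLt)
  have hTw_inner (i : Fin n) : ⟪b i, T w⟫_𝕜 = 0 := by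
    by_cases hi : (i : ℕ) < k
    · simpa [Matrix.mulVec, dotProduct, w, inner_sum, inner_smul_right, mul_comm] using
        congrFun hx ⟨i, hi⟩
    · rw [← adjoint_inner_left, hT (hbK i (not_lt.1 hi)), inner_zero_left]
  have hTw : T w = 0 := by
    rw [← b.sum_repr' (T w)]
    simp [hTw_inner]
  have hw : w = 0 := Submodule.disjoint_def.1 (ker T).orthogonal_disjoint w hTw hw_perp
  exact funext <| Fintype.linearIndependent_iff.1
    (b.orthonormal.linearIndependent.comp _ (Fin.castLE_injective hk)) x hw

end OrthonormalBasis

end InnerProductSpace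

theorem orthogonal_block_decomposition_general
    (n ℓ : ℕ) (J : Matrix (Fin n) (Fin n) ℝ)
    (Xm : Fin (ℓ + 1) → Matrix (Fin n) (Fin n) ℝ)
    (hJ : Jᵀ = -J) (hX : ∀ i, (Xm i).PosSemidef)
    (r : ℕ)
    (hr : r = Module.finrank ℝ
        (LinearMap.ker (Matrix.mulVecLin (-J + ∑ i, Xm i)))) :
    ∃ U : Matrix (Fin n) (Fin n) ℝ,
      U ∈ Matrix.orthogonalGroup (Fin n) ℝ ∧
      (∀ i j : Fin n, (n - r ≤ (i : ℕ) ∨ n - r ≤ (j : ℕ)) → (Uᵀ * J * U) i j = 0) ∧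
      (∀ m, ∀ i j : Fin n, (n - r ≤ (i : ℕ) ∨ n - r ≤ (j : ℕ)) →
          (Uᵀ * Xm m * U) i j = 0) ∧
      IsUnit ((Uᵀ * (-J + ∑ i, Xm i) * U).submatrix
          (Fin.castLE (Nat.sub_le n r)) (Fin.castLE (Nat.sub_le n r))) := by
  set A := -J + ∑ i, Xm i
  set K := ker (toEuclideanLin A)
  have hker {v} (hv : A *ᵥ v = 0) := mulVec_eq_zero_of_neg_add_sum_posSemidef hJ hX hv
  have hXT (m : Fin (ℓ + 1)) : (Xm m)ᵀ = Xm m := by simpa using (hX m).isHermitian.eq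
  have hfinrank : finrank ℝ Kᗮ = n - r := by
    have := K.finrank_add_finrank_orthogonal
    rw [finrank_euclideanSpace_fin, finrank_ker_toEuclideanLin, ← hr] at this
    omega
  obtain ⟨b, hb⟩ := K.exists_orthonormalBasis_orthogonal_append finrank_euclideanSpace_fin
  simp only [hfinrank] at hb
  set U := (EuclideanSpace.basisFun (Fin n) ℝ).toBasis.toMatrix b
  have hconj (M : Matrix (Fin n) (Fin n) ℝ) (i j : Fin n) :
      (Uᵀ * M * U) i j = ⟪b i, toEuclideanLin M (b j)⟫_ℝ := by
    rw [← conjTranspose_eq_transpose_of_trivial]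
    exact b.conjTranspose_toMatrix_mul_mul_toMatrix_apply M i j
  have hblock {M : Matrix (Fin n) (Fin n) ℝ} (hM : ∀ v, A *ᵥ v = 0 → M *ᵥ v = 0 ∧ Mᵀ *ᵥ v = 0)
      (i j : Fin n) (hij : n - r ≤ (i : ℕ) ∨ n - r ≤ (j : ℕ)) : (Uᵀ * M * U) i j = 0 :=
    hconj M i j ▸ b.inner_apply_eq_zero_of_le_ker
      (ker_toEuclideanLin_le_ker fun v hv => (hM v hv).1)
      (ker_toEuclideanLin_le_ker_adjoint fun v hv => by simpa using (hM v hv).2)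
      (fun i => (hb i).2) hij
  refine ⟨U, (EuclideanSpace.basisFun _ ℝ).toMatrix_orthonormalBasis_mem_orthogonal b,
    hblock fun v hv => ?_, fun m => hblock fun v hv => ?_, ?_⟩
  · simp [hJ, neg_mulVec, (hker hv).1]
  · simp [hXT, (hker hv).2 m]
  · convert b.isUnit_of_inner_apply (ker_toEuclideanLin_le_ker_adjoint fun v hv => ?_)
      (Nat.sub_le n r) (fun i => (hb i).1) (fun i => (hb i).2) using 1
    · ext i j
      exact hconj A _ _
    · simpa [A, hJ, hXT, transpose_sum, add_mulVec, sum_mulVec, (hker hv).2] using (hker hv).1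

theorem orthogonal_block_decomposition
    (n ℓ : ℕ) (J : Matrix (Fin n) (Fin n) ℝ)
    (Xm : Fin (ℓ + 1) → Matrix (Fin n) (Fin n) ℝ)
    (hJ : Jᵀ = -J) (hX : ∀ i, (Xm i).PosSemidef)
    (r : ℕ)
    (hr : r = Module.finrank ℝ
        (LinearMap.ker (Matrix.mulVecLin (-J + ∑ i, Xm i))))
    (hrpos : 0 < r) :
    ∃ U : Matrix (Fin n) (Fin n) ℝ,
      U ∈ Matrix.orthogonalGroup (Fin n) ℝ ∧
      (∀ i j : Fin n, (n - r ≤ (i : ℕ) ∨ n - r ≤ (j : ℕ)) → (Uᵀ * J * U) i j = 0) ∧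
      (∀ m, ∀ i j : Fin n, (n - r ≤ (i : ℕ) ∨ n - r ≤ (j : ℕ)) →
          (Uᵀ * Xm m * U) i j = 0) ∧
      IsUnit ((Uᵀ * (-J + ∑ i, Xm i) * U).submatrix
          (Fin.castLE (Nat.sub_le n r)) (Fin.castLE (Nat.sub_le n r))) :=
  orthogonal_block_decomposition_general n ℓ J Xm hJ hX r hr
end
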